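/- Let K be a field, A and B commutative K-algebras, C a cocommutative K-coalgebra, and ψ : C → Hom_K(A,B) a (cocommutative) coalgebra measuring from A to B. Let M be an A-module, N a B-module, D a C-comodule, and φ : D → Hom_K(M,N) a C-comodule measuring from M to N relative to ψ. Then for every pointed simplicial set Y and every t ∈ D, there is an induced K-linear morphism φ^Y_n(t) : HH_n^Y(A,M) → HH_n^Y(B,N) for each n ≥ 0 on higher order Hochschild homology groups of order Y, induced by the chain-level maps m ⊗ a₁ ⊗ … ⊗ a_k ↦ Σ φ(t₍₀₎)(m) ⊗ ψ(t₍₁₎)(a₁) ⊗ … ⊗ ψ(t₍ₖ₎)(a_k). -/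

import Mathlib

/-!
Common infrastructure: the skeletal category `Γ` of finite pointed sets, coalgebra
measurings, comodule measurings, iterated comultiplications/coactions, the Sweedler-type
chain-level maps of a measuring, the Loday `Γ`-module data, and higher order Hochschild
homology of a `Γ`-module with respect to a pointed simplicial set (via left Kan extension
along `Γ → Sets_⋆`, followed by the Moore (alternating face map) complex and homology).
-/

open CategoryTheory TensorProduct PiTensorProduct

/-- A morphism of the skeletal category `Γ` of finite pointed sets, from
`[k] = {0,…,k}` to `[l] = {0,…,l}` (based at `0`). -/
@[ext] structure GammaHom (k l : ℕ) : Type where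
  toFun : Fin (k + 1) → Fin (l + 1)
  map_zero : toFun 0 = 0

/-- The identity of `[k]` in `Γ`. -/
def GammaHom.id (k : ℕ) : GammaHom k k := ⟨_root_.id, rfl⟩

/-- Composition in `Γ`. -/
def GammaHom.comp {k l p : ℕ} (g : GammaHom l p) (f : GammaHom k l) : GammaHom k p :=
  ⟨g.toFun ∘ f.toFun, by simp [Function.comp, f.map_zero, g.map_zero]⟩

/-- The skeletal category `Γ` of finite pointed sets `[k] = {0,1,…,k}` based at `0`. -/
structure GammaCat : Type where
  len : ℕ

instance : Category GammaCat where
  Hom a b := GammaHom a.len b.len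
  id a := GammaHom.id a.len
  comp f g := g.comp f
  id_comp _ := rfl
  comp_id _ := rfl
  assoc _ _ _ := rfl

/-- The inclusion `Γ → Sets_⋆` of `Γ` into the category of pointed sets. -/
def gammaToPointed : GammaCat ⥤ Pointed.{0} where
  obj a := ⟨Fin (a.len + 1), 0⟩
  map f := ⟨f.toFun, f.map_zero⟩
  map_id _ := rfl
  map_comp _ _ := rfl

/-- The fiber `f⁻¹(0) ∖ {0}` of `f : [k] → [l]` over the basepoint, with
`{1,…,k}` identified with `Fin k` via `i ↦ i.succ`. -/
def fiber0 {k l : ℕ} (f : GammaHom k l) : Finset (Fin k) :=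
  Finset.univ.filter fun i => f.toFun i.succ = 0

/-- The fiber `f⁻¹(j)` of `f : [k] → [l]` over `j ∈ {1,…,l}`, with
`{1,…,k}` identified with `Fin k` via `i ↦ i.succ`. -/
def fiber {k l : ℕ} (f : GammaHom k l) (j : Fin l) : Finset (Fin k) :=
  Finset.univ.filter fun i => f.toFun i.succ = j.succ

section Measuring

variable (K A B C : Type) [Field K]
variable [Ring A] [Algebra K A] [Ring B] [Algebra K B]
variable [AddCommGroup C] [Module K C] [Coalgebra K C]

/-- `ψ : C →ₗ[K] Hom_K(A,B)` is a coalgebra measuring from `A` to `B`: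
`ψ s (a * a') = Σ ψ s₍₁₎ a * ψ s₍₂₎ a'` (Sweedler sum over `Δ s = Σ s₍₁₎ ⊗ s₍₂₎`)
and `ψ s 1 = ε s • 1`. -/
structure IsMeasuring (ψ : C →ₗ[K] A →ₗ[K] B) : Prop where
  measures_mul : ∀ (s : C) (a a' : A),
    ψ s (a * a') =
      TensorProduct.lift ((LinearMap.mul K B).compl₁₂ (ψ.flip a) (ψ.flip a'))
        (Coalgebra.comul s)
  measures_one : ∀ s : C, ψ s 1 = Coalgebra.counit (R := K) s • (1 : B)

/-- The coalgebra `C` is cocommutative. -/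
def IsCocommutative : Prop :=
  (TensorProduct.comm K C C).toLinearMap ∘ₗ Coalgebra.comul =
    (Coalgebra.comul : C →ₗ[K] C ⊗[K] C)

end Measuring

section Comodule

variable (K C D : Type) [Field K]
variable [AddCommGroup C] [Module K C] [Coalgebra K C]
variable [AddCommGroup D] [Module K D]

/-- A (left) `C`-comodule structure `δ : D → C ⊗ D` on `D`, coassociative and counital. -/
structure CoactionStruct where
  δ : D →ₗ[K] C ⊗[K] D
  coassoc : (TensorProduct.assoc K C C D).toLinearMap ∘ₗ
      (Coalgebra.comul (R := K) (A := C)).rTensor D ∘ₗ δ = δ.lTensor C ∘ₗ δ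
  rTensor_counit_comp_coaction :
    (Coalgebra.counit (R := K) (A := C)).rTensor D ∘ₗ δ = TensorProduct.mk K K D 1

/-- Any coalgebra is a comodule over itself via its comultiplication. -/
def selfCoaction : CoactionStruct K C C where
  δ := Coalgebra.comul
  coassoc := Coalgebra.coassoc
  rTensor_counit_comp_coaction := Coalgebra.rTensor_counit_comp_comul

/-- Nested tensor powers `C ⊗ (C ⊗ (⋯ ⊗ (C ⊗ D)))` with `k` factors of `C`. -/
noncomputable def TD : ℕ → ModuleCat.{0} K
  | 0 => ModuleCat.of K D
  | (k+1) => ModuleCat.of K (C ⊗[K] TD k)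

/-- Iterated comultiplication of the first tensor factor,
`Δ^{(k)} ⊗ id : C ⊗ D → C^{⊗(k+1)} ⊗ D`, where `Δ^{(0)} = id` and
`Δ^{(j)} = (Δ ⊗ id^{⊗(j-1)}) ∘ Δ^{(j-1)}`. -/
noncomputable def comulIterTail : (k : ℕ) → (C ⊗[K] D) →ₗ[K] TD K C D (k+1)
  | 0 => LinearMap.id
  | (k+1) =>
      (((TensorProduct.assoc K C C (TD K C D k)).toLinearMap ∘ₗ
        (Coalgebra.comul (R := K) (A := C)).rTensor (TD K C D k)) ∘ₗ
        comulIterTail k)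

/-- The iterated coaction `D → C^{⊗k} ⊗ D` giving the iterated Sweedler coefficients
`t₍₁₎ ⊗ ⋯ ⊗ t₍ₖ₎ ⊗ t₍₀₎` of `t ∈ D`: the coaction `δ` followed by the `(k-1)`-fold
iterated comultiplication on the `C`-factor. -/
noncomputable def coactIter (ρ : CoactionStruct K C D) : (k : ℕ) → D →ₗ[K] TD K C D k
  | 0 => LinearMap.id
  | (k+1) => comulIterTail K C D k ∘ₗ ρ.δ

/-- The iterated comultiplication `Δ^{(k-1)} : C → C^{⊗k}` (with `Δ^{(0)} = id`,
`Δ^{(j)} = (Δ ⊗ id^{⊗(j-1)}) ∘ Δ^{(j-1)}`), giving the iterated Sweedler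
coefficients `s₍₁₎ ⊗ ⋯ ⊗ s₍ₖ₎` of `s ∈ C`. -/
noncomputable def comulIter : (k : ℕ) → C →ₗ[K] TD K C C k
  | 0 => LinearMap.id
  | (k+1) => comulIterTail K C C k ∘ₗ Coalgebra.comul

end Comodule

section ComodMeasuring

variable (K A B C D M N : Type) [Field K]
variable [Ring A] [Algebra K A] [Ring B] [Algebra K B]
variable [AddCommGroup C] [Module K C] [Coalgebra K C]
variable [AddCommGroup D] [Module K D]
variable [AddCommGroup M] [Module K M] [Module A M] [IsScalarTower K A M] [SMulCommClass K A M]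
variable [AddCommGroup N] [Module K N] [Module B N] [IsScalarTower K B N] [SMulCommClass K B N]

/-- The scalar action of `B` on the `B`-module `N`, as a `K`-bilinear map. -/
def lsmulKB : B →ₗ[K] N →ₗ[K] N :=
  LinearMap.mk₂ K (fun b n => b • n) (fun b b' n => add_smul b b' n)
    (fun c b n => smul_assoc c b n) (fun b n n' => smul_add b n n')
    (fun c b n => (smul_comm c b n).symm)

/-- `φ : D →ₗ[K] Hom_K(M,N)` is a `C`-comodule measuring from the `A`-module `M` to the
`B`-module `N`, relative to the measuring `ψ` and the coaction `ρ` on `D`: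
`φ t (a • m) = Σ ψ t₍₀₎ a • φ t₍₁₎ m` (Sweedler sum over `δ t = Σ t₍₀₎ ⊗ t₍₁₎`). -/
structure IsComodMeasuring (ψ : C →ₗ[K] A →ₗ[K] B) (ρ : CoactionStruct K C D)
    (φ : D →ₗ[K] M →ₗ[K] N) : Prop where
  measures : ∀ (t : D) (a : A) (m : M),
    φ t (a • m) =
      TensorProduct.lift ((lsmulKB K B N).compl₁₂ (ψ.flip a) (φ.flip m)) (ρ.δ t)

variable (ψ : C →ₗ[K] A →ₗ[K] B) (φ : D →ₗ[K] M →ₗ[K] N)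

/-- `c₁ ⊗ (c₂ ⊗ (⋯ ⊗ cₖ₊₁)) ↦ ψ c₁ a₁ * (ψ c₂ a₂ * (⋯ * ψ cₖ₊₁ aₖ₊₁))` : the ordered
product of the values of a measuring on the iterated Sweedler coefficients. -/
noncomputable def prodPair : (k : ℕ) → (Fin (k+1) → A) → (TD K C C k →ₗ[K] B)
  | 0, a => ψ.flip (a 0)
  | (k+1), a => TensorProduct.lift
      ((LinearMap.mul K B).compl₁₂ (ψ.flip (a 0)) (prodPair k (a ∘ Fin.succ)))

/-- `c₁ ⊗ (⋯ ⊗ (cₖ ⊗ d)) ↦ ψ c₁ a₁ • (ψ c₂ a₂ • (⋯ • φ d m))`. -/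
noncomputable def modPair : (k : ℕ) → (Fin k → A) → M → (TD K C D k →ₗ[K] N)
  | 0, _, m => φ.flip m
  | (k+1), a, m => TensorProduct.lift
      ((lsmulKB K B N).compl₁₂ (ψ.flip (a 0)) (modPair k (a ∘ Fin.succ) m))

/-- Prepending a factor to a tensor power of `B`, as a `K`-bilinear map. -/
noncomputable def tprodCons (k : ℕ) :
    B →ₗ[K] (⨂[K] (_ : Fin k), B) →ₗ[K] (⨂[K] (_ : Fin (k+1)), B) :=
  (PiTensorProduct.lift).toLinearMap ∘ₗ
    (PiTensorProduct.tprod K (s := fun _ : Fin (k+1) => B)).curryLeft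

/-- `c₁ ⊗ (⋯ ⊗ (cₖ ⊗ d)) ↦ φ d m ⊗ ψ c₁ a₁ ⊗ ⋯ ⊗ ψ cₖ aₖ` : applied to the iterated
coaction of `t`, this produces the Sweedler-type chain-level expression
`Σ φ t₍₀₎ m ⊗ ψ t₍₁₎ a₁ ⊗ ⋯ ⊗ ψ t₍ₖ₎ aₖ` of a comodule measuring. -/
noncomputable def measurePair : (k : ℕ) → M → (Fin k → A) →
    (TD K C D k →ₗ[K] N ⊗[K] (⨂[K] (_ : Fin k), B))
  | 0, m, _ =>
      (TensorProduct.mk K N (⨂[K] (_ : Fin 0), B)).flip (tprod K (fun _ : Fin 0 => (1:B)))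
        ∘ₗ (φ.flip m)
  | (k+1), m, a => TensorProduct.lift <|
      ((LinearMap.llcomp K (TD K C D k) (N ⊗[K] (⨂[K] (_ : Fin k), B))
          (N ⊗[K] (⨂[K] (_ : Fin (k+1)), B))).flip (measurePair k m (a ∘ Fin.succ))) ∘ₗ
        ((TensorProduct.mapBilinear (σ₁₂ := RingHom.id K) (M := N) (N := ⨂[K] (_ : Fin k), B) (M₂ := N)
            (N₂ := ⨂[K] (_ : Fin (k+1)), B)
            LinearMap.id) ∘ₗ (tprodCons K B k) ∘ₗ (ψ.flip (a 0)))

end ComodMeasuring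

section Loday

variable (K A M : Type) [Field K] [CommRing A] [Algebra K A]
variable [AddCommGroup M] [Module K M] [Module A M] [IsScalarTower K A M] [SMulCommClass K A M]

/-- The `k`-th term `M ⊗ A^{⊗k}` of the Loday `Γ`-module `L(A,M)`. -/
abbrev Lob (k : ℕ) : Type := M ⊗[K] (⨂[K] (_ : Fin k), A)

/-- The value of the Loday map `L(A,M)(f)` on the pure tensor `m ⊗ a₁ ⊗ ⋯ ⊗ aₖ`, namely
`(m • ∏_{i ∈ f⁻¹(0), i ≠ 0} aᵢ) ⊗ (∏_{i ∈ f⁻¹(1)} aᵢ) ⊗ ⋯ ⊗ (∏_{i ∈ f⁻¹(l)} aᵢ)`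
(empty products are `1`). -/
noncomputable def lodayElt {k l : ℕ} (f : GammaHom k l) (m : M) (a : Fin k → A) :
    Lob K A M l :=
  ((∏ i ∈ fiber0 f, a i) • m) ⊗ₜ[K] tprod K (fun j => ∏ i ∈ fiber f j, a i)

/-- The Loday `Γ`-module `L(A,M) : Γ ⥤ Vect_K`, assembled from a family of linear maps
satisfying the functoriality equations. -/
noncomputable def lodayFunctorOf
    (F : ∀ k l : ℕ, GammaHom k l → (Lob K A M k →ₗ[K] Lob K A M l))
    (hFid : ∀ k, F k k (GammaHom.id k) = LinearMap.id)
    (hFcomp : ∀ (k l p : ℕ) (f : GammaHom k l) (g : GammaHom l p),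
      F k p (g.comp f) = (F l p g) ∘ₗ (F k l f)) :
    GammaCat ⥤ ModuleCat.{0} K where
  obj a := ModuleCat.of K (Lob K A M a.len)
  map {a b} f := ModuleCat.ofHom (F a.len b.len f)
  map_id a := congrArg ModuleCat.ofHom (hFid a.len)
  map_comp {a b c} f g := congrArg ModuleCat.ofHom (hFcomp a.len b.len c.len f g)

end Loday

section HH

variable (K : Type) [Field K]

/-- The simplicial vector space `R̃(Y_•)` associated to a `Γ`-module `R` and a pointed
simplicial set `Y`, where `R̃ : Sets_⋆ ⥤ Vect_K` is the left Kan extension of `R` along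
the inclusion `Γ → Sets_⋆`. -/
noncomputable def simplicialExt (L : GammaCat ⥤ ModuleCat.{0} K)
    (Y : SimplexCategoryᵒᵖ ⥤ Pointed.{0}) : SimplicialObject (ModuleCat.{0} K) :=
  Y ⋙ (gammaToPointed.lan).obj L

/-- The homology `H_n(R̃(Y_•))` of the simplicial vector space `R̃(Y_•)` (computed via the
Moore / alternating face map complex).  For `R = L(A,M)` this is the higher order
Hochschild homology `HH_n^Y(A,M)` of order `Y`. -/
noncomputable def hh (L : GammaCat ⥤ ModuleCat.{0} K)
    (Y : SimplexCategoryᵒᵖ ⥤ Pointed.{0}) (n : ℕ) : ModuleCat.{0} K :=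
  ((AlgebraicTopology.alternatingFaceMapComplex (ModuleCat.{0} K)).obj
    (simplicialExt K L Y)).homology n

/-- The map induced on `H_n(R̃(Y_•))` by a morphism of `Γ`-modules `η : R ⟶ R'`. -/
noncomputable def hhMapOfNat {L L' : GammaCat ⥤ ModuleCat.{0} K} (η : L ⟶ L')
    (Y : SimplexCategoryᵒᵖ ⥤ Pointed.{0}) (n : ℕ) : hh K L Y n ⟶ hh K L' Y n :=
  HomologicalComplex.homologyMap
    ((AlgebraicTopology.alternatingFaceMapComplex (ModuleCat.{0} K)).map
      (CategoryTheory.Functor.whiskerLeft Y ((gammaToPointed.lan).map η))) n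

/-- The map induced on `H_n(R̃(Y_•))` by a map of pointed simplicial sets `g : Y ⟶ Z`. -/
noncomputable def hhMapOfSimplicial (L : GammaCat ⥤ ModuleCat.{0} K)
    {Y Z : SimplexCategoryᵒᵖ ⥤ Pointed.{0}} (g : Y ⟶ Z) (n : ℕ) :
    hh K L Y n ⟶ hh K L Z n :=
  HomologicalComplex.homologyMap
    ((AlgebraicTopology.alternatingFaceMapComplex (ModuleCat.{0} K)).map
      (CategoryTheory.Functor.whiskerRight g ((gammaToPointed.lan).obj L))) n

end HH

/-!
The chain map `L^φ(t)` sends `m ⊗ a₁ ⊗ ⋯ ⊗ aₖ` to `Σ φ t₍₀₎ m ⊗ ψ t₍₁₎ a₁ ⊗ ⋯ ⊗ ψ t₍ₖ₎ aₖ`;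
everything else is functoriality of Kan extension, Moore complex and homology, so the content
is that `L^φ(t)` is natural in `Γ`. A morphism `f : [k+1] → [l]` is determined by `f 1` and
its restriction `f.tail` to the remaining points, and the Loday map of `f` is that of `f.tail`
followed by multiplying `a₁` into slot `f 1`. Naturality therefore follows by induction on `k`
from a single absorption identity: feeding one more Sweedler coefficient `ψ t₍ᵢ₎ x` into slot
`j` of `N ⊗ B^{⊗l}` is the same as multiplying the `j`-th argument by `x`. For the module slot
this is the comodule measuring axiom, for the slot just created it is the measuring axiom
`ψ s (x y) = Σ ψ s₍₁₎ x · ψ s₍₂₎ y`, and moving past the other slots needs coassociativity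
and cocommutativity to reorder the Sweedler coefficients.
-/

theorem TensorProduct.ext_tmul_tprod {R ι M P : Type*} [CommSemiring R] {s : ι → Type*}
    [∀ i, AddCommMonoid (s i)] [∀ i, Module R (s i)] [AddCommMonoid M] [Module R M]
    [AddCommMonoid P] [Module R P] {f g : M ⊗[R] (⨂[R] i, s i) →ₗ[R] P}
    (h : ∀ m v, f (m ⊗ₜ tprod R v) = g (m ⊗ₜ tprod R v)) : f = g :=
  TensorProduct.ext (LinearMap.ext fun m => PiTensorProduct.ext (MultilinearMap.ext (h m)))

theorem IsCocommutative.lift_flip_comp_comul {K C W : Type} [Field K] [AddCommGroup C]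
    [Module K C] [Coalgebra K C] [AddCommMonoid W] [Module K W] (hco : IsCocommutative K C)
    (F : C →ₗ[K] C →ₗ[K] W) :
    TensorProduct.lift F.flip ∘ₗ Coalgebra.comul = TensorProduct.lift F ∘ₗ Coalgebra.comul := by
  have : TensorProduct.lift F.flip =
      TensorProduct.lift F ∘ₗ (TensorProduct.comm K C C).toLinearMap := by
    ext c c'
    rfl
  rw [this, LinearMap.comp_assoc, hco]

namespace CoactionStruct

open WithConv

variable {K C D : Type} [Field K] [AddCommGroup C] [Module K C] [Coalgebra K C]
  [AddCommGroup D] [Module K D] (ρ : CoactionStruct K C D)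
  {X Y Y' Z : Type} [AddCommMonoid X] [Module K X] [AddCommMonoid Y] [Module K Y]
  [AddCommMonoid Y'] [Module K Y'] [AddCommMonoid Z] [Module K Z]

/-- `F ↦ (t ↦ Σ F t₍₀₎ t₍₁₎)`, where `δ t = Σ t₍₀₎ ⊗ t₍₁₎`. -/
noncomputable def sweedlerSum : (C →ₗ[K] D →ₗ[K] X) →ₗ[K] D →ₗ[K] X :=
  (LinearMap.llcomp K D (C ⊗[K] D) X).flip ρ.δ ∘ₗ TensorProduct.uncurry (RingHom.id K) C D X

theorem sweedlerSum_eq (F : C →ₗ[K] D →ₗ[K] X) :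
    ρ.sweedlerSum F = TensorProduct.lift F ∘ₗ ρ.δ :=
  rfl

theorem comp_sweedlerSum (g : X →ₗ[K] Y) (F : C →ₗ[K] D →ₗ[K] X) :
    g ∘ₗ ρ.sweedlerSum F = ρ.sweedlerSum (F.compr₂ g) := by
  rw [sweedlerSum_eq, sweedlerSum_eq, TensorProduct.lift_compr₂, LinearMap.comp_assoc]

theorem sweedlerSum_sweedlerSum (F : C →ₗ[K] C →ₗ[K] D →ₗ[K] X) :
    ρ.sweedlerSum (ρ.sweedlerSum ∘ₗ F) =
      ρ.sweedlerSum (TensorProduct.lift F ∘ₗ Coalgebra.comul) := by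
  have lhs : TensorProduct.lift (ρ.sweedlerSum ∘ₗ F) =
      TensorProduct.lift (TensorProduct.lift.equiv (RingHom.id K) C D X ∘ₗ F) ∘ₗ
        ρ.δ.lTensor C := by
    ext c d
    rfl
  have rhs : TensorProduct.lift (TensorProduct.lift F ∘ₗ Coalgebra.comul) =
      TensorProduct.lift (TensorProduct.lift.equiv (RingHom.id K) C D X ∘ₗ F) ∘ₗ
        (TensorProduct.assoc K C C D).toLinearMap ∘ₗ (Coalgebra.comul (R := K)).rTensor D := by
    ext c d
    simp only [TensorProduct.AlgebraTensorModule.curry_apply, TensorProduct.curry_apply,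
      LinearMap.coe_restrictScalars, TensorProduct.lift.tmul, LinearMap.comp_apply,
      LinearMap.rTensor_tmul]
    induction Coalgebra.comul (R := K) c with
    | zero => simp
    | tmul c₁ c₂ => rfl
    | add x y hx hy => simp only [map_add, LinearMap.add_apply, TensorProduct.add_tmul, hx, hy]
  rw [sweedlerSum_eq, sweedlerSum_eq, lhs, rhs, LinearMap.comp_assoc, LinearMap.comp_assoc,
    LinearMap.comp_assoc, ρ.coassoc]

theorem sweedlerSum_counit_smulRight (R : D →ₗ[K] X) :
    ρ.sweedlerSum ((Coalgebra.counit (R := K) (A := C)).smulRight R) = R := by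
  have h : TensorProduct.lift ((Coalgebra.counit (R := K) (A := C)).smulRight R) =
      R ∘ₗ (TensorProduct.lid K D).toLinearMap ∘ₗ (Coalgebra.counit (R := K)).rTensor D := by
    ext c d
    simp
  rw [sweedlerSum_eq, h, LinearMap.comp_assoc, LinearMap.comp_assoc,
    ρ.rTensor_counit_comp_coaction]
  ext d
  simp

section Module

variable {B : Type} [AddCommMonoid B] [Module K B]

/-- `(e, Q) ↦ (t ↦ Σ T (e t₍₀₎) (Q t₍₁₎))`. -/
noncomputable def sweedlerAct (T : B →ₗ[K] X →ₗ[K] Y) :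
    (C →ₗ[K] B) →ₗ[K] (D →ₗ[K] X) →ₗ[K] D →ₗ[K] Y :=
  (LinearMap.lflip.toLinearMap ∘ₗ
    LinearMap.llcomp K C B _ (LinearMap.llcomp K D X Y ∘ₗ T)).compr₂ ρ.sweedlerSum

theorem sweedlerAct_eq (T : B →ₗ[K] X →ₗ[K] Y) (e : C →ₗ[K] B) (Q : D →ₗ[K] X) :
    ρ.sweedlerAct T e Q = ρ.sweedlerSum (LinearMap.lcomp K Y Q ∘ₗ T ∘ₗ e) :=
  rfl

theorem comp_sweedlerAct {X' : Type} [AddCommMonoid X'] [Module K X'] (g : Y →ₗ[K] Z)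
    (g' : X →ₗ[K] X') (T : B →ₗ[K] X →ₗ[K] Y) (T' : B →ₗ[K] X' →ₗ[K] Z) (e : C →ₗ[K] B)
    (Q : D →ₗ[K] X) (h : ∀ b, g ∘ₗ T b = T' b ∘ₗ g') :
    g ∘ₗ ρ.sweedlerAct T e Q = ρ.sweedlerAct T' e (g' ∘ₗ Q) := by
  rw [sweedlerAct_eq, sweedlerAct_eq, comp_sweedlerSum]
  congr 1
  ext c d
  exact LinearMap.congr_fun (h (e c)) (Q d)

/-- In Sweedler notation: coassociativity of the coaction. -/
theorem sweedlerAct_sweedlerAct (T : B →ₗ[K] Y →ₗ[K] Z) (S : B →ₗ[K] X →ₗ[K] Y)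
    (e e' : C →ₗ[K] B) (Q : D →ₗ[K] X) (W : C →ₗ[K] C →ₗ[K] D →ₗ[K] Z)
    (hW : ∀ c c', W c c' = T (e c) ∘ₗ S (e' c') ∘ₗ Q) :
    ρ.sweedlerAct T e (ρ.sweedlerAct S e' Q) =
      ρ.sweedlerSum (TensorProduct.lift W ∘ₗ Coalgebra.comul) := by
  rw [← sweedlerSum_sweedlerSum, sweedlerAct_eq]
  congr 1
  ext c : 1
  rw [LinearMap.comp_apply, LinearMap.comp_apply, LinearMap.comp_apply, LinearMap.lcomp_apply',
    sweedlerAct_eq, comp_sweedlerSum]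
  congr 1
  ext c' d
  simp [hW]

theorem sweedlerAct_comm (hco : IsCocommutative K C) (T : B →ₗ[K] Y →ₗ[K] Z)
    (S : B →ₗ[K] X →ₗ[K] Y) (T' : B →ₗ[K] Y' →ₗ[K] Z) (S' : B →ₗ[K] X →ₗ[K] Y')
    (e e' : C →ₗ[K] B) (Q : D →ₗ[K] X) (h : ∀ b b', T b ∘ₗ S b' = T' b' ∘ₗ S' b) :
    ρ.sweedlerAct T e (ρ.sweedlerAct S e' Q) = ρ.sweedlerAct T' e' (ρ.sweedlerAct S' e Q) := by
  set W : C →ₗ[K] C →ₗ[K] D →ₗ[K] Z :=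
    (LinearMap.llcomp K D Y Z ∘ₗ T ∘ₗ e).compl₂ (LinearMap.lcomp K Y Q ∘ₗ S ∘ₗ e')
  rw [ρ.sweedlerAct_sweedlerAct T S e e' Q W (fun _ _ => rfl),
    ρ.sweedlerAct_sweedlerAct T' S' e' e Q W.flip
      (fun c c' => by rw [LinearMap.flip_apply, ← LinearMap.comp_assoc, ← h]; rfl),
    hco.lift_flip_comp_comul]

end Module

variable {B : Type} [Semiring B] [Algebra K B]

theorem sweedlerAct_convMul (hco : IsCocommutative K C) (T : B →ₗ[K] X →ₗ[K] Y)
    (U : B →ₗ[K] Y →ₗ[K] Y) (e e' : C →ₗ[K] B) (Q : D →ₗ[K] X)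
    (h : ∀ b b', T (b * b') = U b' ∘ₗ T b) :
    ρ.sweedlerAct T (toConv e * toConv e').ofConv Q =
      ρ.sweedlerAct U e' (ρ.sweedlerAct T e Q) := by
  set W : C →ₗ[K] C →ₗ[K] D →ₗ[K] Y :=
    (LinearMap.llcomp K D Y Y ∘ₗ U ∘ₗ e').compl₂ (LinearMap.lcomp K Y Q ∘ₗ T ∘ₗ e)
  rw [ρ.sweedlerAct_sweedlerAct U T e' e Q W (fun _ _ => rfl), ← hco.lift_flip_comp_comul,
    sweedlerAct_eq]
  congr 1
  ext c : 1
  simp only [LinearMap.comp_apply, LinearMap.convMul_apply]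
  induction Coalgebra.comul (R := K) c with
  | zero => simp
  | tmul c₁ c₂ => ext d; simp [W, h]
  | add x y hx hy => simp only [map_add, hx, hy]

theorem sweedlerAct_one (T : B →ₗ[K] X →ₗ[K] Y) (Q : D →ₗ[K] X) :
    ρ.sweedlerAct T (1 : WithConv (C →ₗ[K] B)).ofConv Q = T 1 ∘ₗ Q := by
  rw [sweedlerAct_eq, ← ρ.sweedlerSum_counit_smulRight (T 1 ∘ₗ Q)]
  congr 1
  ext c d
  simp [LinearMap.convOne_def, Algebra.algebraMap_eq_smul_one]

end CoactionStruct

section Iterated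

variable {K C D : Type} [Field K] [AddCommGroup C] [Module K C] [Coalgebra K C]
  [AddCommGroup D] [Module K D]

theorem assoc_comp_rTensor_comul_comp_lTensor {V W : Type} [AddCommGroup V] [Module K V]
    [AddCommGroup W] [Module K W] (g : V →ₗ[K] W) :
    ((TensorProduct.assoc K C C W).toLinearMap ∘ₗ (Coalgebra.comul (R := K)).rTensor W) ∘ₗ
        g.lTensor C =
      ((g.lTensor C).lTensor C ∘ₗ (TensorProduct.assoc K C C V).toLinearMap) ∘ₗ
        (Coalgebra.comul (R := K)).rTensor V := by
  ext c v
  simp only [TensorProduct.AlgebraTensorModule.curry_apply, TensorProduct.curry_apply,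
    LinearMap.coe_restrictScalars, LinearMap.coe_comp, Function.comp_apply,
    LinearMap.lTensor_tmul, LinearMap.rTensor_tmul, LinearEquiv.coe_coe]
  induction Coalgebra.comul (R := K) c with
  | zero => simp
  | tmul c₁ c₂ => rfl
  | add x y hx hy => simp only [TensorProduct.add_tmul, map_add, hx, hy]

theorem coactIter_succ (ρ : CoactionStruct K C D) (k : ℕ) :
    coactIter K C D ρ (k + 1) = (coactIter K C D ρ k).lTensor C ∘ₗ ρ.δ := by
  induction k with
  | zero =>
    change LinearMap.id ∘ₗ ρ.δ = (LinearMap.id : D →ₗ[K] D).lTensor C ∘ₗ ρ.δ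
    rw [LinearMap.lTensor_id]
  | succ k ih =>
    have step : ((TensorProduct.assoc K C C (TD K C D k)).toLinearMap ∘ₗ
        (Coalgebra.comul (R := K)).rTensor (TD K C D k)) ∘ₗ
          ((coactIter K C D ρ k).lTensor C ∘ₗ ρ.δ) =
        ((coactIter K C D ρ k).lTensor C ∘ₗ ρ.δ).lTensor C ∘ₗ ρ.δ := by
      rw [← LinearMap.comp_assoc, assoc_comp_rTensor_comul_comp_lTensor, LinearMap.comp_assoc,
        LinearMap.comp_assoc, ρ.coassoc, ← LinearMap.comp_assoc, ← LinearMap.lTensor_comp]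
    rw [← ih] at step
    exact step

end Iterated

namespace Lob

variable (K : Type) {B : Type} (N : Type) [Field K] [CommRing B] [Algebra K B]
  [AddCommGroup N] [Module K N]

omit N in
theorem tprodCons_tprod (k : ℕ) (b : B) (v : Fin k → B) :
    tprodCons K B k b (PiTensorProduct.tprod K v) = PiTensorProduct.tprod K (Fin.cons b v) := by
  simp [tprodCons]

noncomputable def cons (k : ℕ) : B →ₗ[K] Lob K B N k →ₗ[K] Lob K B N (k + 1) :=
  LinearMap.lTensorHom N ∘ₗ tprodCons K B k

noncomputable def mulFactor (k : ℕ) (j : Fin k) : B →ₗ[K] Lob K B N k →ₗ[K] Lob K B N k :=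
  LinearMap.lTensorHom N ∘ₗ
    (PiTensorProduct.mapMultilinear K (fun _ : Fin k => B) (fun _ => B)).toLinearMap
      (fun _ => LinearMap.id) j ∘ₗ LinearMap.mul K B

theorem cons_tmul_tprod (k : ℕ) (b : B) (n : N) (v : Fin k → B) :
    cons K N k b (n ⊗ₜ[K] PiTensorProduct.tprod K v) =
      n ⊗ₜ PiTensorProduct.tprod K (Fin.cons b v) := by
  simp [cons, tprodCons_tprod]

theorem mulFactor_tmul_tprod (k : ℕ) (j : Fin k) (b : B) (n : N) (v : Fin k → B) :
    mulFactor K N k j b (n ⊗ₜ[K] PiTensorProduct.tprod K v) =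
      n ⊗ₜ PiTensorProduct.tprod K (Function.update v j (b * v j)) := by
  simp only [mulFactor, LinearMap.comp_apply, LinearMap.coe_lTensorHom, LinearMap.lTensor_tmul,
    MultilinearMap.toLinearMap_apply, PiTensorProduct.mapMultilinear_apply,
    PiTensorProduct.map_tprod]
  congr 2
  ext i
  rcases eq_or_ne i j with rfl | hi <;> simp [*]

theorem mulFactor_succ_comp_cons (k : ℕ) (j : Fin k) (b b' : B) :
    mulFactor K N (k + 1) j.succ b ∘ₗ cons K N k b' = cons K N k b' ∘ₗ mulFactor K N k j b :=
  TensorProduct.ext_tmul_tprod fun n v => by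
    simp [cons_tmul_tprod, mulFactor_tmul_tprod, Fin.cons_update]

theorem cons_mul (k : ℕ) (b b' : B) :
    cons K N k (b * b') = mulFactor K N (k + 1) 0 b' ∘ₗ cons K N k b :=
  TensorProduct.ext_tmul_tprod fun n v => by
    simp [cons_tmul_tprod, mulFactor_tmul_tprod, mul_comm]

variable [Module B N] [IsScalarTower K B N] [SMulCommClass K B N]

noncomputable def smulModule (k : ℕ) : B →ₗ[K] Lob K B N k →ₗ[K] Lob K B N k :=
  LinearMap.rTensorHom _ ∘ₗ lsmulKB K B N

/-- Multiplication into slot `j` of `N ⊗ B^{⊗k}`, where slot `0` is the module `N` and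
slot `j + 1` is the `B`-factor number `j`. -/
noncomputable def mulSlot (k : ℕ) (j : Fin (k + 1)) : B →ₗ[K] Lob K B N k →ₗ[K] Lob K B N k :=
  Fin.cases (smulModule K N k) (mulFactor K N k) j

theorem smulModule_tmul (k : ℕ) (b : B) (n : N) (x : ⨂[K] _ : Fin k, B) :
    smulModule K N k b (n ⊗ₜ[K] x) = (b • n) ⊗ₜ x :=
  rfl

theorem smulModule_comp_cons (k : ℕ) (b b' : B) :
    smulModule K N (k + 1) b ∘ₗ cons K N k b' = cons K N k b' ∘ₗ smulModule K N k b :=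
  TensorProduct.ext_tmul_tprod fun n v => by
    simp [cons_tmul_tprod, smulModule_tmul]

theorem mulSlot_tmul_tprod (k : ℕ) (j : Fin (k + 1)) (b : B) (n : N) (v : Fin k → B) :
    mulSlot K N k j b (n ⊗ₜ[K] PiTensorProduct.tprod K v) =
      ((if j = 0 then b else 1) • n) ⊗ₜ
        PiTensorProduct.tprod K (fun i => (if j = i.succ then b else 1) * v i) := by
  cases j using Fin.cases with
  | zero => simp [mulSlot, smulModule_tmul, (Fin.succ_ne_zero _).symm]
  | succ j =>
    simp only [mulSlot, Fin.cases_succ, mulFactor_tmul_tprod, Fin.succ_ne_zero, if_false,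
      one_smul, Fin.succ_inj]
    congr 2
    ext i
    rcases eq_or_ne i j with rfl | hi <;> simp [*, Ne.symm]

end Lob

/-- The restriction of `f : [k+1] → [l]` to `[k+1] ∖ {1}`, renumbered as `[k]`. -/
def GammaHom.tail {k l : ℕ} (f : GammaHom (k + 1) l) : GammaHom k l :=
  ⟨Fin.cases 0 fun i => f.toFun i.succ.succ, rfl⟩

section Fibers

variable {k l : ℕ} {α : Type} [CommMonoid α]

theorem prod_fiber0_succ (f : GammaHom (k + 1) l) (a : Fin (k + 1) → α) :
    ∏ i ∈ fiber0 f, a i =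
      (if f.toFun 1 = 0 then a 0 else 1) * ∏ i ∈ fiber0 f.tail, a i.succ := by
  simp only [fiber0, Finset.prod_filter, Fin.prod_univ_succ, Fin.succ_zero_eq_one]
  rfl

theorem prod_fiber_succ (f : GammaHom (k + 1) l) (j : Fin l) (a : Fin (k + 1) → α) :
    ∏ i ∈ fiber f j, a i =
      (if f.toFun 1 = j.succ then a 0 else 1) * ∏ i ∈ fiber f.tail j, a i.succ := by
  simp only [fiber, Finset.prod_filter, Fin.prod_univ_succ, Fin.succ_zero_eq_one]
  rfl

end Fibers

section LodayElt

variable {K B N : Type} [Field K] [CommRing B] [Algebra K B] [AddCommGroup N] [Module K N]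
  [Module B N] [IsScalarTower K B N] [SMulCommClass K B N]

theorem lodayElt_cons {k l : ℕ} (f : GammaHom (k + 1) l) (n : N) (b : B) (v : Fin k → B) :
    lodayElt K B N f n (Fin.cons b v) =
      Lob.mulSlot K N l (f.toFun 1) b (lodayElt K B N f.tail n v) := by
  simp [lodayElt, Lob.mulSlot_tmul_tprod, prod_fiber0_succ, prod_fiber_succ, mul_smul]

theorem lodayMap_comp_cons (G : ∀ k l : ℕ, GammaHom k l → (Lob K B N k →ₗ[K] Lob K B N l))
    (hG : ∀ (k l : ℕ) (f : GammaHom k l) (n : N) (b : Fin k → B),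
      G k l f (n ⊗ₜ[K] PiTensorProduct.tprod K b) = lodayElt K B N f n b)
    {k l : ℕ} (f : GammaHom (k + 1) l) (b : B) :
    G (k + 1) l f ∘ₗ Lob.cons K N k b = Lob.mulSlot K N l (f.toFun 1) b ∘ₗ G k l f.tail :=
  TensorProduct.ext_tmul_tprod fun n v => by
    simp [Lob.cons_tmul_tprod, hG, lodayElt_cons]

end LodayElt

open WithConv

section Measuring

variable {K A B C D M N : Type} [Field K] [CommRing A] [Algebra K A] [CommRing B] [Algebra K B]
  [AddCommGroup C] [Module K C] [Coalgebra K C] [AddCommGroup D] [Module K D]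
  [AddCommGroup M] [Module K M] [Module A M]
  [AddCommGroup N] [Module K N] [Module B N] [IsScalarTower K B N] [SMulCommClass K B N]
  {ψ : C →ₗ[K] A →ₗ[K] B}

theorem IsMeasuring.flip_mul (hψ : IsMeasuring K A B C ψ) (x y : A) :
    ψ.flip (x * y) = (toConv (ψ.flip x) * toConv (ψ.flip y)).ofConv := by
  ext c
  rw [LinearMap.flip_apply, hψ.measures_mul, LinearMap.convMul_apply]
  induction Coalgebra.comul (R := K) c with
  | zero => simp
  | tmul c₁ c₂ => simp
  | add u v hu hv => simp only [map_add, hu, hv]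

theorem IsMeasuring.flip_one (hψ : IsMeasuring K A B C ψ) :
    ψ.flip 1 = (1 : WithConv (C →ₗ[K] B)).ofConv := by
  ext c
  simp [hψ.measures_one c, Algebra.algebraMap_eq_smul_one]

theorem IsComodMeasuring.flip_smul {ρ : CoactionStruct K C D} {φ : D →ₗ[K] M →ₗ[K] N}
    (hφ : IsComodMeasuring K A B C D M N ψ ρ φ) (x : A) (m : M) :
    φ.flip (x • m) = ρ.sweedlerAct (lsmulKB K B N) (ψ.flip x) (φ.flip m) := by
  ext d
  rw [LinearMap.flip_apply, hφ.measures, CoactionStruct.sweedlerAct_eq,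
    CoactionStruct.sweedlerSum_eq]
  rfl

end Measuring

section SweedlerTensor

variable {K A B C D M N : Type} [Field K] [CommRing A] [Algebra K A] [CommRing B] [Algebra K B]
  [AddCommGroup C] [Module K C] [Coalgebra K C] [AddCommGroup D] [Module K D]
  [AddCommGroup M] [Module K M] [AddCommGroup N] [Module K N]
  (ψ : C →ₗ[K] A →ₗ[K] B) (ρ : CoactionStruct K C D) (φ : D →ₗ[K] M →ₗ[K] N)

/-- `t ↦ Σ φ t₍₀₎ m ⊗ ψ t₍₁₎ a₁ ⊗ ⋯ ⊗ ψ t₍ₖ₎ aₖ`. -/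
noncomputable def sweedlerTensor (k : ℕ) (m : M) (a : Fin k → A) : D →ₗ[K] Lob K B N k :=
  measurePair K A B C D M N ψ φ k m a ∘ₗ coactIter K C D ρ k

theorem sweedlerTensor_zero (m : M) (a : Fin 0 → A) :
    sweedlerTensor ψ ρ φ 0 m a =
      (TensorProduct.mk K N _).flip (PiTensorProduct.tprod K fun _ => 1) ∘ₗ φ.flip m :=
  rfl

theorem sweedlerTensor_succ (k : ℕ) (m : M) (a : Fin (k + 1) → A) :
    sweedlerTensor ψ ρ φ (k + 1) m a =
      ρ.sweedlerAct (Lob.cons K N k) (ψ.flip (a 0)) (sweedlerTensor ψ ρ φ k m (Fin.tail a)) := by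
  have h : measurePair K A B C D M N ψ φ (k + 1) m a ∘ₗ (coactIter K C D ρ k).lTensor C =
      TensorProduct.lift (LinearMap.lcomp K _ (sweedlerTensor ψ ρ φ k m (Fin.tail a)) ∘ₗ
        Lob.cons K N k ∘ₗ ψ.flip (a 0)) :=
    TensorProduct.ext' fun c d => rfl
  rw [sweedlerTensor, coactIter_succ, CoactionStruct.sweedlerAct_eq,
    CoactionStruct.sweedlerSum_eq, ← h]
  rfl

theorem sweedlerTensor_add (k : ℕ) (m m' : M) (a : Fin k → A) :
    sweedlerTensor ψ ρ φ k (m + m') a =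
      sweedlerTensor ψ ρ φ k m a + sweedlerTensor ψ ρ φ k m' a := by
  induction k with
  | zero => simp [sweedlerTensor_zero, LinearMap.comp_add]
  | succ k ih => simp [sweedlerTensor_succ, ih]

theorem sweedlerTensor_smul (k : ℕ) (r : K) (m : M) (a : Fin k → A) :
    sweedlerTensor ψ ρ φ k (r • m) a = r • sweedlerTensor ψ ρ φ k m a := by
  induction k with
  | zero => simp [sweedlerTensor_zero, LinearMap.comp_smul]
  | succ k ih => simp [sweedlerTensor_succ, ih]

theorem sweedlerTensor_update_add (k : ℕ) (m : M) (a : Fin k → A) (i : Fin k) (x y : A) :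
    sweedlerTensor ψ ρ φ k m (Function.update a i (x + y)) =
      sweedlerTensor ψ ρ φ k m (Function.update a i x) +
        sweedlerTensor ψ ρ φ k m (Function.update a i y) := by
  induction k with
  | zero => exact i.elim0
  | succ k ih =>
    cases i using Fin.cases with
    | zero => simp [sweedlerTensor_succ, Fin.tail_update_zero]
    | succ i =>
      simp [sweedlerTensor_succ, Fin.tail_update_succ, ih,
        Function.update_of_ne (Fin.succ_ne_zero i).symm]

theorem sweedlerTensor_update_smul (k : ℕ) (m : M) (a : Fin k → A) (i : Fin k) (r : K) (x : A) :
    sweedlerTensor ψ ρ φ k m (Function.update a i (r • x)) =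
      r • sweedlerTensor ψ ρ φ k m (Function.update a i x) := by
  induction k with
  | zero => exact i.elim0
  | succ k ih =>
    cases i using Fin.cases with
    | zero => simp [sweedlerTensor_succ, Fin.tail_update_zero]
    | succ i =>
      simp [sweedlerTensor_succ, Fin.tail_update_succ, ih,
        Function.update_of_ne (Fin.succ_ne_zero i).symm]

theorem sweedlerTensor_one (hψ : IsMeasuring K A B C ψ) (k : ℕ) (m : M) :
    sweedlerTensor ψ ρ φ k m (fun _ => 1) =
      (TensorProduct.mk K N _).flip (PiTensorProduct.tprod K fun _ => 1) ∘ₗ φ.flip m := by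
  induction k with
  | zero => rfl
  | succ k ih =>
    rw [sweedlerTensor_succ, hψ.flip_one, CoactionStruct.sweedlerAct_one, Fin.tail_def, ih]
    have ones : (Fin.cons 1 fun _ => 1 : Fin (k + 1) → B) = fun _ => 1 :=
      Fin.cons_self_tail fun _ => 1
    ext d
    simp [Lob.cons_tmul_tprod, ones]

noncomputable def sweedlerMultilinear (t : D) (k : ℕ) :
    M →ₗ[K] MultilinearMap K (fun _ : Fin k => A) (Lob K B N k) where
  toFun m :=
    { toFun := fun a => sweedlerTensor ψ ρ φ k m a t
      map_update_add' := fun a i x y => by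
        convert (LinearMap.congr_fun (sweedlerTensor_update_add ψ ρ φ k m a i x y) t).trans
          (LinearMap.add_apply _ _ _)
      map_update_smul' := fun a i r x => by
        convert (LinearMap.congr_fun (sweedlerTensor_update_smul ψ ρ φ k m a i r x) t).trans
          (LinearMap.smul_apply _ _ _) }
  map_add' m m' := by
    ext a
    exact LinearMap.congr_fun (sweedlerTensor_add ψ ρ φ k m m' a) t
  map_smul' r m := by
    ext a
    exact LinearMap.congr_fun (sweedlerTensor_smul ψ ρ φ k r m a) t

noncomputable def sweedlerChainMap (t : D) (k : ℕ) : Lob K A M k →ₗ[K] Lob K B N k :=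
  TensorProduct.lift (PiTensorProduct.lift.toLinearMap ∘ₗ sweedlerMultilinear ψ ρ φ t k)

theorem sweedlerChainMap_tmul_tprod (t : D) (k : ℕ) (m : M) (a : Fin k → A) :
    sweedlerChainMap ψ ρ φ t k (m ⊗ₜ PiTensorProduct.tprod K a) = sweedlerTensor ψ ρ φ k m a t := by
  simp [sweedlerChainMap, sweedlerMultilinear]

end SweedlerTensor

section Naturality

variable {K A B C D M N : Type} [Field K] [CommRing A] [Algebra K A] [CommRing B] [Algebra K B]
  [AddCommGroup C] [Module K C] [Coalgebra K C] [AddCommGroup D] [Module K D]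
  [AddCommGroup M] [Module K M] [Module A M] [AddCommGroup N] [Module K N]
  [Module B N] [IsScalarTower K B N] [SMulCommClass K B N]
  {ψ : C →ₗ[K] A →ₗ[K] B} {ρ : CoactionStruct K C D} {φ : D →ₗ[K] M →ₗ[K] N}

theorem sweedlerAct_mulSlot_sweedlerTensor (hco : IsCocommutative K C)
    (hψ : IsMeasuring K A B C ψ) (hφ : IsComodMeasuring K A B C D M N ψ ρ φ) (l : ℕ)
    (j : Fin (l + 1)) (x : A) (m : M) (a : Fin l → A) :
    ρ.sweedlerAct (Lob.mulSlot K N l j) (ψ.flip x) (sweedlerTensor ψ ρ φ l m a) =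
      sweedlerTensor ψ ρ φ l ((if j = 0 then x else 1) • m)
        (fun i => (if j = i.succ then x else 1) * a i) := by
  induction l with
  | zero =>
    obtain rfl := Fin.fin_one_eq_zero j
    rw [if_pos rfl, sweedlerTensor_zero, sweedlerTensor_zero, hφ.flip_smul]
    exact (ρ.comp_sweedlerAct _ _ _ _ _ _ fun b => by ext n; rfl).symm
  | succ l ih =>
    rw [sweedlerTensor_succ, sweedlerTensor_succ]
    cases j using Fin.cases with
    | zero =>
      rw [show Lob.mulSlot K N (l + 1) 0 = Lob.smulModule K N (l + 1) from rfl,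
        ρ.sweedlerAct_comm hco _ _ _ _ _ _ _ (Lob.smulModule_comp_cons K N l),
        show Lob.smulModule K N l = Lob.mulSlot K N l 0 from rfl, ih]
      simp [Fin.tail_def, (Fin.succ_ne_zero _).symm]
    | succ j =>
      cases j using Fin.cases with
      | zero =>
        rw [show Lob.mulSlot K N (l + 1) (Fin.succ 0) = Lob.mulFactor K N (l + 1) 0 from rfl,
          ← ρ.sweedlerAct_convMul hco _ _ _ _ _ (Lob.cons_mul K N l), ← hψ.flip_mul]
        simp [Fin.tail_def, mul_comm x, (Fin.succ_succ_ne_one _).symm]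
      | succ i =>
        rw [show Lob.mulSlot K N (l + 1) i.succ.succ = Lob.mulFactor K N (l + 1) i.succ from rfl,
          ρ.sweedlerAct_comm hco _ _ _ _ _ _ _ (Lob.mulFactor_succ_comp_cons K N l i),
          show Lob.mulFactor K N l i = Lob.mulSlot K N l i.succ from rfl, ih]
        simp [Fin.tail_def, Fin.succ_succ_ne_one]

theorem comp_sweedlerTensor (hco : IsCocommutative K C) (hψ : IsMeasuring K A B C ψ)
    (hφ : IsComodMeasuring K A B C D M N ψ ρ φ)
    (G : ∀ k l : ℕ, GammaHom k l → (Lob K B N k →ₗ[K] Lob K B N l))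
    (hG : ∀ (k l : ℕ) (f : GammaHom k l) (n : N) (b : Fin k → B),
      G k l f (n ⊗ₜ[K] PiTensorProduct.tprod K b) = lodayElt K B N f n b)
    {k l : ℕ} (f : GammaHom k l) (m : M) (a : Fin k → A) :
    G k l f ∘ₗ sweedlerTensor ψ ρ φ k m a =
      sweedlerTensor ψ ρ φ l ((∏ i ∈ fiber0 f, a i) • m) (fun j => ∏ i ∈ fiber f j, a i) := by
  induction k with
  | zero =>
    simp only [fiber0, fiber, Finset.univ_eq_empty, Finset.filter_empty, Finset.prod_empty,
      one_smul, sweedlerTensor_one ψ ρ φ hψ]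
    ext d
    simp [sweedlerTensor_zero, hG, lodayElt, fiber0, fiber]
  | succ k ih =>
    rw [sweedlerTensor_succ, ρ.comp_sweedlerAct _ _ _ _ _ _ (lodayMap_comp_cons G hG f), ih,
      sweedlerAct_mulSlot_sweedlerTensor hco hψ hφ, smul_smul]
    simp only [prod_fiber0_succ f a, prod_fiber_succ f _ a]
    rfl

theorem sweedlerChainMap_comp (hco : IsCocommutative K C) (hψ : IsMeasuring K A B C ψ)
    (hφ : IsComodMeasuring K A B C D M N ψ ρ φ)
    (F : ∀ k l : ℕ, GammaHom k l → (Lob K A M k →ₗ[K] Lob K A M l))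
    (hF : ∀ (k l : ℕ) (f : GammaHom k l) (m : M) (a : Fin k → A),
      F k l f (m ⊗ₜ[K] PiTensorProduct.tprod K a) = lodayElt K A M f m a)
    (G : ∀ k l : ℕ, GammaHom k l → (Lob K B N k →ₗ[K] Lob K B N l))
    (hG : ∀ (k l : ℕ) (f : GammaHom k l) (n : N) (b : Fin k → B),
      G k l f (n ⊗ₜ[K] PiTensorProduct.tprod K b) = lodayElt K B N f n b)
    (t : D) {k l : ℕ} (f : GammaHom k l) :
    sweedlerChainMap ψ ρ φ t l ∘ₗ F k l f = G k l f ∘ₗ sweedlerChainMap ψ ρ φ t k :=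
  TensorProduct.ext_tmul_tprod fun m a => by
    simp only [LinearMap.comp_apply, hF, lodayElt, sweedlerChainMap_tmul_tprod]
    exact (LinearMap.congr_fun (comp_sweedlerTensor hco hψ hφ G hG f m a) t).symm

end Naturality

theorem measuring_induces_hh_map_general (K A B C D M N : Type) [Field K]
    [CommRing A] [Algebra K A] [CommRing B] [Algebra K B]
    [AddCommGroup C] [Module K C] [Coalgebra K C]
    [AddCommGroup D] [Module K D]
    [AddCommGroup M] [Module K M] [Module A M]
    [AddCommGroup N] [Module K N] [Module B N] [IsScalarTower K B N] [SMulCommClass K B N]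
    (ψ : C →ₗ[K] A →ₗ[K] B) (hψ : IsMeasuring K A B C ψ)
    (hcocomm : IsCocommutative K C)
    (ρ : CoactionStruct K C D) (φ : D →ₗ[K] M →ₗ[K] N)
    (hφ : IsComodMeasuring K A B C D M N ψ ρ φ)
    (F : ∀ k l : ℕ, GammaHom k l → (Lob K A M k →ₗ[K] Lob K A M l))
    (hF : ∀ (k l : ℕ) (f : GammaHom k l) (m : M) (a : Fin k → A),
        F k l f (m ⊗ₜ[K] tprod K a) = lodayElt K A M f m a)
    (hFid : ∀ k, F k k (GammaHom.id k) = LinearMap.id)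
    (hFcomp : ∀ (k l p : ℕ) (f : GammaHom k l) (g : GammaHom l p),
        F k p (g.comp f) = (F l p g) ∘ₗ (F k l f))
    (G : ∀ k l : ℕ, GammaHom k l → (Lob K B N k →ₗ[K] Lob K B N l))
    (hG : ∀ (k l : ℕ) (f : GammaHom k l) (n : N) (b : Fin k → B),
        G k l f (n ⊗ₜ[K] tprod K b) = lodayElt K B N f n b)
    (hGid : ∀ k, G k k (GammaHom.id k) = LinearMap.id)
    (hGcomp : ∀ (k l p : ℕ) (f : GammaHom k l) (g : GammaHom l p),
        G k p (g.comp f) = (G l p g) ∘ₗ (G k l f))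
    (Y : SimplexCategoryᵒᵖ ⥤ Pointed.{0}) (t : D) :
    ∃ η : lodayFunctorOf K A M F hFid hFcomp ⟶ lodayFunctorOf K B N G hGid hGcomp,
      (∀ (k : ℕ) (m : M) (a : Fin k → A),
          η.app ⟨k⟩ (m ⊗ₜ[K] tprod K a) =
            measurePair K A B C D M N ψ φ k m a (coactIter K C D ρ k t)) ∧
      (∀ n : ℕ, ∃ induced :
            hh K (lodayFunctorOf K A M F hFid hFcomp) Y n ⟶
              hh K (lodayFunctorOf K B N G hGid hGcomp) Y n,
          induced = hhMapOfNat K η Y n) := by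
  let η : lodayFunctorOf K A M F hFid hFcomp ⟶ lodayFunctorOf K B N G hGid hGcomp :=
    { app x := ModuleCat.ofHom (sweedlerChainMap ψ ρ φ t x.len)
      naturality _ _ f :=
        ModuleCat.hom_ext (sweedlerChainMap_comp hcocomm hψ hφ F hF G hG t f) }
  exact ⟨η, sweedlerChainMap_tmul_tprod ψ ρ φ t, fun n => ⟨_, rfl⟩⟩

/-- Theorem 2.3, first part. Let `ψ : C →ₗ[K] Hom_K(A,B)` be a
cocommutative coalgebra measuring between commutative `K`-algebras and
`φ : D →ₗ[K] Hom_K(M,N)` a `C`-comodule measuring relative to `ψ`.  Given the Loday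
`Γ`-modules `L(A,M)` and `L(B,N)` (families `F`, `G` of linear maps acting by the Loday
formula on pure tensors and functorial), for every pointed simplicial set `Y` and every
`t ∈ D` there is a natural transformation `L^φ(t) : L(A,M) ⟶ L(B,N)` acting on pure
tensors by `m ⊗ a₁ ⊗ ⋯ ⊗ aₖ ↦ Σ φ t₍₀₎ m ⊗ ψ t₍₁₎ a₁ ⊗ ⋯ ⊗ ψ t₍ₖ₎ aₖ`, and for each
`n ≥ 0` an induced `K`-linear morphism
`φ^Y_n(t) : HH_n^Y(A,M) ⟶ HH_n^Y(B,N)` on higher order Hochschild homology, namely the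
map induced on `H_n` by `L^φ(t)` through Kan extension along `Γ → Sets_⋆`, evaluation
on `Y`, and the Moore complex. -/
theorem measuring_induces_hh_map (K A B C D M N : Type) [Field K]
    [CommRing A] [Algebra K A] [CommRing B] [Algebra K B]
    [AddCommGroup C] [Module K C] [Coalgebra K C]
    [AddCommGroup D] [Module K D]
    [AddCommGroup M] [Module K M] [Module A M] [IsScalarTower K A M] [SMulCommClass K A M]
    [AddCommGroup N] [Module K N] [Module B N] [IsScalarTower K B N] [SMulCommClass K B N]
    (ψ : C →ₗ[K] A →ₗ[K] B) (hψ : IsMeasuring K A B C ψ)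
    (hcocomm : IsCocommutative K C)
    (ρ : CoactionStruct K C D) (φ : D →ₗ[K] M →ₗ[K] N)
    (hφ : IsComodMeasuring K A B C D M N ψ ρ φ)
    (F : ∀ k l : ℕ, GammaHom k l → (Lob K A M k →ₗ[K] Lob K A M l))
    (hF : ∀ (k l : ℕ) (f : GammaHom k l) (m : M) (a : Fin k → A),
        F k l f (m ⊗ₜ[K] tprod K a) = lodayElt K A M f m a)
    (hFid : ∀ k, F k k (GammaHom.id k) = LinearMap.id)
    (hFcomp : ∀ (k l p : ℕ) (f : GammaHom k l) (g : GammaHom l p),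
        F k p (g.comp f) = (F l p g) ∘ₗ (F k l f))
    (G : ∀ k l : ℕ, GammaHom k l → (Lob K B N k →ₗ[K] Lob K B N l))
    (hG : ∀ (k l : ℕ) (f : GammaHom k l) (n : N) (b : Fin k → B),
        G k l f (n ⊗ₜ[K] tprod K b) = lodayElt K B N f n b)
    (hGid : ∀ k, G k k (GammaHom.id k) = LinearMap.id)
    (hGcomp : ∀ (k l p : ℕ) (f : GammaHom k l) (g : GammaHom l p),
        G k p (g.comp f) = (G l p g) ∘ₗ (G k l f))
    (Y : SimplexCategoryᵒᵖ ⥤ Pointed.{0}) (t : D) :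
    ∃ η : lodayFunctorOf K A M F hFid hFcomp ⟶ lodayFunctorOf K B N G hGid hGcomp,
      (∀ (k : ℕ) (m : M) (a : Fin k → A),
          η.app ⟨k⟩ (m ⊗ₜ[K] tprod K a) =
            measurePair K A B C D M N ψ φ k m a (coactIter K C D ρ k t)) ∧
      (∀ n : ℕ, ∃ induced :
            hh K (lodayFunctorOf K A M F hFid hFcomp) Y n ⟶
              hh K (lodayFunctorOf K B N G hGid hGcomp) Y n,
          induced = hhMapOfNat K η Y n) :=
  measuring_induces_hh_map_general K A B C D M N ψ hψ hcocomm ρ φ hφ F hF hFid hFcomp G hG hGid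
    hGcomp Y t
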